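/- arXiv:2311.14044 — 5 statements merged into one kernel-verified Lean document; each statement's English description precedes it below -/
import Mathlib

section
/- Let T be an m × n complex matrix with Tᴴ T = 1 (an isometry), and let S be an m × m complex matrix with Sᴴ = S and S·S = 1 (a Hermitian involution). Let x ∈ ℂⁿ be a unit vector (⟨x, x⟩ = 1) and λ ∈ ℝ with λ² < 1 such that Tᴴ S T x = λ x. Define u := T x and v := (√(1−λ²))⁻¹ • (S u − λ u). Then {u, v} is an orthonormal pair: ⟨u, u⟩ = 1, ⟨v, v⟩ = 1 and ⟨u, v⟩ = 0, where ⟨·,·⟩ is the standard Hermitian inner product on ℂᵐ (conjugate-linear in the first argument). -/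
/-! Since `T` is an isometry and `S` is unitary, `u` and `S u` are unit vectors, and
`⟨u, S u⟩ = ⟨x, Tᴴ S T x⟩ = λ` is real. So `v` is the Gram–Schmidt normalisation of `S u`
against `u`: `S u - λ u` is orthogonal to `u` and has squared length `1 - λ²`. -/

open Matrix

section Adjoint

variable {m n n' α : Type*} [Fintype m] [Fintype n] [Fintype n']

theorem star_mulVec_dotProduct_mulVec [NonUnitalSemiring α] [StarRing α]
    (A : Matrix m n α) (B : Matrix m n' α) (x : n → α) (y : n' → α) :
    star (A *ᵥ x) ⬝ᵥ B *ᵥ y = star x ⬝ᵥ (Aᴴ * B) *ᵥ y := by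
  rw [star_mulVec, ← dotProduct_mulVec, mulVec_mulVec]

theorem star_mulVec_dotProduct_mulVec_of_isometry [Semiring α] [StarRing α] [DecidableEq n]
    {A : Matrix m n α} (hA : Aᴴ * A = 1) (x y : n → α) :
    star (A *ᵥ x) ⬝ᵥ A *ᵥ y = star x ⬝ᵥ y := by
  rw [star_mulVec_dotProduct_mulVec, hA, one_mulVec]

end Adjoint

section GramSchmidt

variable {ι R : Type*} [Fintype ι] [CommRing R] [StarRing R] {u w : ι → R} {c : R}

theorem star_dotProduct_sub_smul_eq_zero (hu : star u ⬝ᵥ u = 1) (hc : star u ⬝ᵥ w = c) :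
    star u ⬝ᵥ (w - c • u) = 0 := by
  rw [dotProduct_sub, dotProduct_smul, hu, hc, smul_eq_mul, mul_one, sub_self]

theorem star_sub_smul_dotProduct_sub_smul (hu : star u ⬝ᵥ u = 1) (hw : star w ⬝ᵥ w = 1)
    (hc : star u ⬝ᵥ w = c) (hc_real : star c = c) :
    star (w - c • u) ⬝ᵥ (w - c • u) = 1 - c ^ 2 := by
  have hwu : star w ⬝ᵥ u = c := by rw [star_dotProduct, hc, hc_real]
  simp only [star_sub, star_smul, sub_dotProduct, dotProduct_sub, smul_dotProduct,
    dotProduct_smul, hu, hw, hc, hwu, hc_real, smul_eq_mul]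
  ring

end GramSchmidt

theorem star_inv_sqrt_smul_dotProduct_inv_sqrt_smul {ι 𝕜 : Type*} [Fintype ι] [RCLike 𝕜]
    {v : ι → 𝕜} {r : ℝ} (hv : star v ⬝ᵥ v = r) (hr : 0 < r) :
    star ((Real.sqrt r : 𝕜)⁻¹ • v) ⬝ᵥ ((Real.sqrt r : 𝕜)⁻¹ • v) = 1 := by
  have hsqrt : (Real.sqrt r : 𝕜) ≠ 0 := by exact_mod_cast (Real.sqrt_pos.2 hr).ne'
  rw [star_smul, smul_dotProduct, dotProduct_smul, hv, star_inv₀, RCLike.star_def,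
    RCLike.conj_ofReal, smul_eq_mul, smul_eq_mul, ← mul_assoc, ← mul_inv,
    ← RCLike.ofReal_mul, Real.mul_self_sqrt hr.le, inv_mul_cancel₀ (by exact_mod_cast hr.ne')]

/-- In the quantum-walk construction, `u = T x` and the normalized component
`v = (√(1-λ²))⁻¹ (S u - λ u)` form an orthonormal pair. -/
theorem walk_orthonormal_pair {m n : ℕ} (T : Matrix (Fin m) (Fin n) ℂ)
    (hT : Tᴴ * T = 1) (S : Matrix (Fin m) (Fin m) ℂ) (hS : Sᴴ = S) (hS2 : S * S = 1)
    (x : Fin n → ℂ) (hx : ∑ i, starRingEnd ℂ (x i) * x i = 1)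
    (lam : ℝ) (hlam : lam ^ 2 < 1) (heig : (Tᴴ * S * T).mulVec x = (lam : ℂ) • x)
    (u v : Fin m → ℂ) (hu : u = T.mulVec x)
    (hv : v = ((Real.sqrt (1 - lam ^ 2) : ℂ))⁻¹ • (S.mulVec u - (lam : ℂ) • u)) :
    (∑ i, starRingEnd ℂ (u i) * u i = 1) ∧
      (∑ i, starRingEnd ℂ (v i) * v i = 1) ∧
      (∑ i, starRingEnd ℂ (u i) * v i = 0) := by
  change star x ⬝ᵥ x = 1 at hx
  have hS_unitary : Sᴴ * S = 1 := hS.symm ▸ hS2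
  have huu : star u ⬝ᵥ u = 1 := by rw [hu, star_mulVec_dotProduct_mulVec_of_isometry hT, hx]
  have hSu : star (S *ᵥ u) ⬝ᵥ S *ᵥ u = 1 := by
    rw [star_mulVec_dotProduct_mulVec_of_isometry hS_unitary, huu]
  have hlam_u : star u ⬝ᵥ S *ᵥ u = lam := by
    rw [hu, mulVec_mulVec, star_mulVec_dotProduct_mulVec, ← Matrix.mul_assoc, heig,
      dotProduct_smul, hx, smul_eq_mul, mul_one]
  have hlam_real : star (lam : ℂ) = lam := Complex.conj_ofReal lam
  refine ⟨huu, ?_, ?_⟩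
  · rw [hv]
    refine star_inv_sqrt_smul_dotProduct_inv_sqrt_smul ?_ (by linarith)
    rw [star_sub_smul_dotProduct_sub_smul huu hSu hlam_u hlam_real]
    push_cast
    rfl
  · show star u ⬝ᵥ v = 0
    rw [hv, dotProduct_smul, star_dotProduct_sub_smul_eq_zero huu hlam_u, smul_zero]
end

section
/- Let T be an m × n complex matrix with Tᴴ T = 1 (an isometry), and let S be an m × m complex matrix with Sᴴ = S and S·S = 1 (a Hermitian involution). Let x ∈ ℂⁿ be a unit vector (⟨x, x⟩ = 1) and λ ∈ ℝ with λ² < 1 such that Tᴴ S T x = λ x. Define the walk operator W := S(2·T·Tᴴ − 1), u := T x and v := (√(1−λ²))⁻¹ • (S u − λ u). Then W u = λ • u + √(1−λ²) • v. -/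
open Matrix

theorem Matrix.two_smul_mul_sub_one_mul_of_mul_eq_one {m n α : Type*} [Fintype m] [Fintype n]
    [DecidableEq m] [DecidableEq n] [Ring α] {A : Matrix m n α} {B : Matrix n m α}
    (h : B * A = 1) : ((2 : α) • (A * B) - 1) * A = A := by
  rw [Matrix.sub_mul, Matrix.one_mul, Matrix.smul_mul, Matrix.mul_assoc, h, Matrix.mul_one,
    two_smul, add_sub_cancel_right]

theorem walk_operator_apply_u_general {m n : ℕ} (T : Matrix (Fin m) (Fin n) ℂ)
    (hT : Tᴴ * T = 1) (S : Matrix (Fin m) (Fin m) ℂ)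
    (x : Fin n → ℂ)
    (lam : ℝ) (hlam : lam ^ 2 < 1)
    (W : Matrix (Fin m) (Fin m) ℂ) (hW : W = S * ((2 : ℂ) • (T * Tᴴ) - 1))
    (u v : Fin m → ℂ) (hu : u = T.mulVec x)
    (hv : v = ((Real.sqrt (1 - lam ^ 2) : ℂ))⁻¹ • (S.mulVec u - (lam : ℂ) • u)) :
    W.mulVec u = (lam : ℂ) • u + (Real.sqrt (1 - lam ^ 2) : ℂ) • v := by
  have hWu : W *ᵥ u = S *ᵥ u := by
    rw [hW, hu, mulVec_mulVec, Matrix.mul_assoc, two_smul_mul_sub_one_mul_of_mul_eq_one hT,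
      ← mulVec_mulVec]
  have hsqrt : (Real.sqrt (1 - lam ^ 2) : ℂ) ≠ 0 :=
    Complex.ofReal_ne_zero.mpr (Real.sqrt_ne_zero'.mpr (by linarith))
  rw [hWu, hv, smul_inv_smul₀ hsqrt, add_sub_cancel]

/-- First column of the block form of the walk operator `W = S(2TTᴴ - 1)` on the invariant
subspace spanned by `u = T x` and `v`: `W u = λ u + √(1-λ²) v`. -/
theorem walk_operator_apply_u {m n : ℕ} (T : Matrix (Fin m) (Fin n) ℂ)
    (hT : Tᴴ * T = 1) (S : Matrix (Fin m) (Fin m) ℂ) (hS : Sᴴ = S) (hS2 : S * S = 1)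
    (x : Fin n → ℂ) (hx : ∑ i, starRingEnd ℂ (x i) * x i = 1)
    (lam : ℝ) (hlam : lam ^ 2 < 1) (heig : (Tᴴ * S * T).mulVec x = (lam : ℂ) • x)
    (W : Matrix (Fin m) (Fin m) ℂ) (hW : W = S * ((2 : ℂ) • (T * Tᴴ) - 1))
    (u v : Fin m → ℂ) (hu : u = T.mulVec x)
    (hv : v = ((Real.sqrt (1 - lam ^ 2) : ℂ))⁻¹ • (S.mulVec u - (lam : ℂ) • u)) :
    W.mulVec u = (lam : ℂ) • u + (Real.sqrt (1 - lam ^ 2) : ℂ) • v :=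
  walk_operator_apply_u_general T hT S x lam hlam W hW u v hu hv
end

section
/- Let T be an m × n complex matrix with Tᴴ T = 1 (an isometry), and let S be an m × m complex matrix with Sᴴ = S and S·S = 1 (a Hermitian involution). Let x ∈ ℂⁿ be a unit vector (⟨x, x⟩ = 1) and λ ∈ ℝ with λ² < 1 such that Tᴴ S T x = λ x. Define the walk operator W := S(2·T·Tᴴ − 1), u := T x and v := (√(1−λ²))⁻¹ • (S u − λ u). Then W v = −√(1−λ²) • u + λ • v. -/
/-! `P = T Tᴴ` fixes `u = T x` and sends `S u` to `λ u` (the eigenvalue equation pulled back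
through `T`), so with `S² = 1` the walk `W = S(2P - 1)` gives `W u = S u` and
`W (S u) = 2λ S u - u`. Hence `W (S u - λ u) = λ (S u - λ u) - (1 - λ²) u`, which is the claim
after dividing by `√(1 - λ²) ≠ 0`. -/

open Matrix

section

variable {ι R : Type*} [Fintype ι] [CommRing R]

theorem mul_mulVec_mulVec_of_mul_eq_one {κ : Type*} [Fintype κ] [DecidableEq κ]
    {A : Matrix ι κ R} {B : Matrix κ ι R} (h : B * A = 1) (y : κ → R) :
    (A * B) *ᵥ (A *ᵥ y) = A *ᵥ y := by
  rw [mulVec_mulVec, Matrix.mul_assoc, h, Matrix.mul_one]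

theorem mul_two_smul_sub_one_mulVec [DecidableEq ι] (S P : Matrix ι ι R) (w : ι → R) :
    (S * ((2 : R) • P - 1)) *ᵥ w = S *ᵥ ((2 : R) • P *ᵥ w - w) := by
  rw [← mulVec_mulVec, sub_mulVec, smul_mulVec, one_mulVec]

theorem mul_two_smul_sub_one_mulVec_sub_smul [DecidableEq ι] {S P : Matrix ι ι R}
    (hS : S * S = 1) {u : ι → R} {l : R} (hPu : P *ᵥ u = u)
    (hPSu : P *ᵥ (S *ᵥ u) = l • u) :
    (S * ((2 : R) • P - 1)) *ᵥ (S *ᵥ u - l • u) = l • (S *ᵥ u - l • u) - (1 - l ^ 2) • u := by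
  have hSSu : S *ᵥ (S *ᵥ u) = u := by rw [mulVec_mulVec, hS, one_mulVec]
  rw [mul_two_smul_sub_one_mulVec, mulVec_sub P, mulVec_smul P, hPSu, hPu]
  simp only [mulVec_sub, mulVec_smul, hSSu]
  module

end

theorem walk_operator_apply_v_general {m n : ℕ} (T : Matrix (Fin m) (Fin n) ℂ)
    (hT : Tᴴ * T = 1) (S : Matrix (Fin m) (Fin m) ℂ) (hS2 : S * S = 1)
    (x : Fin n → ℂ)
    (lam : ℝ) (hlam : lam ^ 2 < 1) (heig : (Tᴴ * S * T).mulVec x = (lam : ℂ) • x)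
    (W : Matrix (Fin m) (Fin m) ℂ) (hW : W = S * ((2 : ℂ) • (T * Tᴴ) - 1))
    (u v : Fin m → ℂ) (hu : u = T.mulVec x)
    (hv : v = ((Real.sqrt (1 - lam ^ 2) : ℂ))⁻¹ • (S.mulVec u - (lam : ℂ) • u)) :
    W.mulVec v = -((Real.sqrt (1 - lam ^ 2) : ℂ)) • u + (lam : ℂ) • v := by
  have hpos : 0 < 1 - lam ^ 2 := by linarith
  have hc : (Real.sqrt (1 - lam ^ 2) : ℂ) ≠ 0 := by exact_mod_cast (Real.sqrt_pos.mpr hpos).ne'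
  have hc2 : (Real.sqrt (1 - lam ^ 2) : ℂ) ^ 2 = 1 - (lam : ℂ) ^ 2 := by
    exact_mod_cast Real.sq_sqrt hpos.le
  have hPu : (T * Tᴴ) *ᵥ u = u := hu ▸ mul_mulVec_mulVec_of_mul_eq_one hT x
  have hPSu : (T * Tᴴ) *ᵥ (S *ᵥ u) = (lam : ℂ) • u := by
    rw [hu, ← mulVec_smul, ← heig]
    simp only [mulVec_mulVec, Matrix.mul_assoc]
  rw [hv, hW, mulVec_smul, mul_two_smul_sub_one_mulVec_sub_smul hS2 hPu hPSu]
  match_scalars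
  · field_simp
  · field_simp
    linear_combination hc2

/-- Second column of the block form of the walk operator `W = S(2TTᴴ - 1)` on the invariant
subspace spanned by `u = T x` and `v`: `W v = -√(1-λ²) u + λ v`. -/
theorem walk_operator_apply_v {m n : ℕ} (T : Matrix (Fin m) (Fin n) ℂ)
    (hT : Tᴴ * T = 1) (S : Matrix (Fin m) (Fin m) ℂ) (hS : Sᴴ = S) (hS2 : S * S = 1)
    (x : Fin n → ℂ) (hx : ∑ i, starRingEnd ℂ (x i) * x i = 1)
    (lam : ℝ) (hlam : lam ^ 2 < 1) (heig : (Tᴴ * S * T).mulVec x = (lam : ℂ) • x)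
    (W : Matrix (Fin m) (Fin m) ℂ) (hW : W = S * ((2 : ℂ) • (T * Tᴴ) - 1))
    (u v : Fin m → ℂ) (hu : u = T.mulVec x)
    (hv : v = ((Real.sqrt (1 - lam ^ 2) : ℂ))⁻¹ • (S.mulVec u - (lam : ℂ) • u)) :
    W.mulVec v = -((Real.sqrt (1 - lam ^ 2) : ℂ)) • u + (lam : ℂ) • v :=
  walk_operator_apply_v_general T hT S hS2 x lam hlam heig W hW u v hu hv
end

section
/- Let T be an m × n complex matrix with Tᴴ T = 1 (an isometry), and let S be an m × m complex matrix with Sᴴ = S and S·S = 1 (a Hermitian involution). Let x ∈ ℂⁿ be a unit vector (⟨x, x⟩ = 1) and λ ∈ ℝ with λ² < 1 such that Tᴴ S T x = λ x. Define the walk operator W := S(2·T·Tᴴ − 1), u := T x and v := (√(1−λ²))⁻¹ • (S u − λ u). Then for every natural number k ≥ 1: Wᵏ u = Tₖ(λ) • u + √(1−λ²)·Uₖ₋₁(λ) • v and Wᵏ v = −√(1−λ²)·Uₖ₋₁(λ) • u + Tₖ(λ) • v, where Tₖ and Uₖ are the Chebyshev polynomials of the first and second kind evaluated at λ. -/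
open Matrix Polynomial Polynomial.Chebyshev

/- On `span {u, v}` the walk operator acts as the rotation with cosine `λ` and sine
`√(1 - λ²)`: `u = T x` is fixed by the reflection `2 T Tᴴ - 1` and `S u = λ u + √(1 - λ²) v`
by the choice of `v`, while `v` is orthogonal to the range of `T` (because `Tᴴ S T x = λ x`),
so the reflection negates it, and `S v = √(1 - λ²) u - λ v` because `S` is an involution.
The powers of a rotation matrix with cosine `c` are given by `Tₖ(c)` and `Uₖ₋₁(c)`, by the
Chebyshev recurrences. -/

lemma eval_T_add_one_eq {R : Type*} [CommRing R] (n : ℤ) (c : R) :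
    (T R (n + 1)).eval c = c * (T R n).eval c - (1 - c ^ 2) * (U R (n - 1)).eval c := by
  have h := congrArg (eval c) (T_eq_X_mul_T_sub_pol_U R (n - 1))
  rwa [sub_add_cancel, show n - 1 + 2 = n + 1 by ring, eval_sub, eval_mul, eval_mul, eval_X,
    eval_sub, eval_one, eval_pow, eval_X] at h

lemma eval_U_eq {R : Type*} [CommRing R] (n : ℤ) (c : R) :
    (U R n).eval c = c * (U R (n - 1)).eval c + (T R n).eval c := by
  have h := congrArg (eval c) (U_eq_X_mul_U_add_T R (n - 1))
  rwa [sub_add_cancel, eval_add, eval_mul, eval_X] at h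

lemma Module.End.pow_apply_of_rotation {R M : Type*} [CommRing R] [AddCommGroup M] [Module R M]
    (f : Module.End R M) {c s : R} (hcs : c ^ 2 + s ^ 2 = 1) {u v : M}
    (hu : f u = c • u + s • v) (hv : f v = -s • u + c • v) (k : ℕ) :
    (f ^ k) u = (T R k).eval c • u + (s * (U R (k - 1)).eval c) • v ∧
      (f ^ k) v = -(s * (U R (k - 1)).eval c) • u + (T R k).eval c • v := by
  induction k with
  | zero => simp
  | succ k ih =>
    have hs : s ^ 2 = 1 - c ^ 2 := by linear_combination hcs
    have hT := eval_T_add_one_eq (k : ℤ) c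
    have hU := eval_U_eq (k : ℤ) c
    rw [pow_succ', Module.End.mul_apply, Module.End.mul_apply, ih.1, ih.2]
    simp only [map_add, map_smul, hu, hv, Nat.cast_succ, add_sub_cancel_right, hT, hU, ← hs]
    constructor <;> module

lemma reflection_mulVec_mulVec_of_isometry {ι κ K : Type*} [Fintype ι] [Fintype κ]
    [DecidableEq ι] [DecidableEq κ] [Ring K] [Star K] {T : Matrix ι κ K} (hT : Tᴴ * T = 1)
    (x : κ → K) :
    ((2 : K) • (T * Tᴴ) - 1) *ᵥ (T *ᵥ x) = T *ᵥ x := by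
  rw [sub_mulVec, smul_mulVec, mulVec_mulVec, Matrix.mul_assoc, hT, Matrix.mul_one, one_mulVec,
    two_smul]
  exact add_sub_cancel_right _ _

lemma reflection_mulVec_of_conjTranspose_mulVec_eq_zero {ι κ K : Type*} [Fintype ι]
    [Fintype κ] [DecidableEq ι] [Ring K] [Star K] {T : Matrix ι κ K} {v : ι → K}
    (hv : Tᴴ *ᵥ v = 0) : ((2 : K) • (T * Tᴴ) - 1) *ᵥ v = -v := by
  rw [sub_mulVec, smul_mulVec, ← mulVec_mulVec, hv, mulVec_zero, smul_zero, zero_sub, one_mulVec]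

lemma mulVec_eq_of_mul_self_eq_one {ι K : Type*} [Fintype ι] [DecidableEq ι] [CommRing K]
    [IsDomain K] {S : Matrix ι ι K} (hS : S * S = 1) {c s : K} (hcs : c ^ 2 + s ^ 2 = 1) (hs : s ≠ 0)
    {u v : ι → K} (hu : S *ᵥ u = c • u + s • v) : S *ᵥ v = s • u - c • v := by
  have hsv : s • v = S *ᵥ u - c • u := by rw [hu]; module
  apply smul_right_injective _ hs
  calc s • S *ᵥ v = S *ᵥ (S *ᵥ u) - c • S *ᵥ u := by
        rw [← mulVec_smul, hsv, mulVec_sub, mulVec_smul]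
    _ = (c ^ 2 + s ^ 2) • u - c • (c • u + s • v) := by
        rw [mulVec_mulVec, hS, one_mulVec, hcs, one_smul, hu]
    _ = s • (s • u - c • v) := by module

theorem walk_operator_power_block_form_general {m n : ℕ} (T : Matrix (Fin m) (Fin n) ℂ)
    (hT : Tᴴ * T = 1) (S : Matrix (Fin m) (Fin m) ℂ) (hS2 : S * S = 1)
    (x : Fin n → ℂ)
    (lam : ℝ) (hlam : lam ^ 2 < 1) (heig : (Tᴴ * S * T).mulVec x = (lam : ℂ) • x)
    (W : Matrix (Fin m) (Fin m) ℂ) (hW : W = S * ((2 : ℂ) • (T * Tᴴ) - 1))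
    (u v : Fin m → ℂ) (hu : u = T.mulVec x)
    (hv : v = ((Real.sqrt (1 - lam ^ 2) : ℂ))⁻¹ • (S.mulVec u - (lam : ℂ) • u)) :
    ∀ k : ℕ, 1 ≤ k →
      (W ^ k).mulVec u =
          (((Polynomial.Chebyshev.T ℝ (k : ℤ)).eval lam : ℝ) : ℂ) • u +
            ((Real.sqrt (1 - lam ^ 2) *
                (Polynomial.Chebyshev.U ℝ ((k : ℤ) - 1)).eval lam : ℝ) : ℂ) • v ∧
        (W ^ k).mulVec v =
          -((Real.sqrt (1 - lam ^ 2) *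
                (Polynomial.Chebyshev.U ℝ ((k : ℤ) - 1)).eval lam : ℝ) : ℂ) • u +
            (((Polynomial.Chebyshev.T ℝ (k : ℤ)).eval lam : ℝ) : ℂ) • v := by
  intro k _
  set s := Real.sqrt (1 - lam ^ 2)
  have hs : (s : ℂ) ≠ 0 := by exact_mod_cast (Real.sqrt_pos.mpr (by linarith)).ne'
  have hcs : (lam : ℂ) ^ 2 + (s : ℂ) ^ 2 = 1 := by
    exact_mod_cast (show lam ^ 2 + s ^ 2 = 1 by rw [Real.sq_sqrt (by linarith)]; ring)
  have hSu : S *ᵥ u = (lam : ℂ) • u + (s : ℂ) • v := by rw [hv, smul_inv_smul₀ hs]; module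
  have hTv : Tᴴ *ᵥ v = 0 := by
    rw [hv, mulVec_smul, mulVec_sub, mulVec_smul, hu, mulVec_mulVec, mulVec_mulVec,
      mulVec_mulVec, heig, hT, one_mulVec, sub_self, smul_zero]
  have hWu : W *ᵥ u = (lam : ℂ) • u + (s : ℂ) • v := by
    rw [hW, ← mulVec_mulVec, hu, reflection_mulVec_mulVec_of_isometry hT, ← hu, hSu]
  have hWv : W *ᵥ v = -(s : ℂ) • u + (lam : ℂ) • v := by
    rw [hW, ← mulVec_mulVec, reflection_mulVec_of_conjTranspose_mulVec_eq_zero hTv, mulVec_neg,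
      mulVec_eq_of_mul_self_eq_one hS2 hcs hs hSu]
    module
  have hrot := Module.End.pow_apply_of_rotation (toLin' W) hcs hWu hWv k
  simp only [← toLin'_pow, toLin'_apply] at hrot
  simpa [← algebraMap_eval_T, ← algebraMap_eval_U] using hrot

/-- Block form of powers of the walk operator: within the invariant subspace spanned by
`u = T x` and `v`, `Wᵏ` acts as `[[Tₖ(λ), -√(1-λ²)Uₖ₋₁(λ)],[√(1-λ²)Uₖ₋₁(λ), Tₖ(λ)]]`
for every `k ≥ 1`. -/
theorem walk_operator_power_block_form {m n : ℕ} (T : Matrix (Fin m) (Fin n) ℂ)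
    (hT : Tᴴ * T = 1) (S : Matrix (Fin m) (Fin m) ℂ) (hS : Sᴴ = S) (hS2 : S * S = 1)
    (x : Fin n → ℂ) (hx : ∑ i, starRingEnd ℂ (x i) * x i = 1)
    (lam : ℝ) (hlam : lam ^ 2 < 1) (heig : (Tᴴ * S * T).mulVec x = (lam : ℂ) • x)
    (W : Matrix (Fin m) (Fin m) ℂ) (hW : W = S * ((2 : ℂ) • (T * Tᴴ) - 1))
    (u v : Fin m → ℂ) (hu : u = T.mulVec x)
    (hv : v = ((Real.sqrt (1 - lam ^ 2) : ℂ))⁻¹ • (S.mulVec u - (lam : ℂ) • u)) :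
    ∀ k : ℕ, 1 ≤ k →
      (W ^ k).mulVec u =
          (((Polynomial.Chebyshev.T ℝ (k : ℤ)).eval lam : ℝ) : ℂ) • u +
            ((Real.sqrt (1 - lam ^ 2) *
                (Polynomial.Chebyshev.U ℝ ((k : ℤ) - 1)).eval lam : ℝ) : ℂ) • v ∧
        (W ^ k).mulVec v =
          -((Real.sqrt (1 - lam ^ 2) *
                (Polynomial.Chebyshev.U ℝ ((k : ℤ) - 1)).eval lam : ℝ) : ℂ) • u +
            (((Polynomial.Chebyshev.T ℝ (k : ℤ)).eval lam : ℝ) : ℂ) • v :=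
  walk_operator_power_block_form_general T hT S hS2 x lam hlam heig W hW u v hu hv
end

section
/- Let T be an m × n complex matrix with Tᴴ T = 1 (an isometry), and let S be an m × m complex matrix with Sᴴ = S and S·S = 1 (a Hermitian involution). Let x ∈ ℂⁿ be a unit vector (⟨x, x⟩ = 1) and λ ∈ ℝ with λ² < 1 such that Tᴴ S T x = λ x. Define the walk operator W := S(2·T·Tᴴ − 1). Then for every natural number k, Tᴴ (Wᵏ (T x)) = Tₖ(λ) • x, where Tₖ is the k-th Chebyshev polynomial of the first kind evaluated at λ. -/
open Matrix Polynomial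

/-! The vectors `u = T x` and `S u` span a `W`-invariant plane on which `W` acts as
`u ↦ S u ↦ 2λ S u - u`. Hence `k ↦ Wᵏ u` obeys the three-term Chebyshev recurrence, and so
does its image under `Tᴴ`, which starts with `x, λ x` because `Tᴴ T = 1` and `Tᴴ S T x = λ x`. -/

namespace Polynomial.Chebyshev

theorem eq_T_eval_smul_of_recurrence {R M : Type*} [CommRing R] [AddCommGroup M] [Module R M]
    {c : R} {y : M} {a : ℕ → M} (h₀ : a 0 = y) (h₁ : a 1 = c • y)
    (hrec : ∀ k, a (k + 2) = (2 * c) • a (k + 1) - a k) (k : ℕ) :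
    a k = (T R k).eval c • y := by
  induction k using Nat.twoStepInduction with
  | zero => simp [h₀]
  | one => simp [h₁]
  | more k ihk ihk₁ =>
    rw [hrec, ihk, ihk₁, show ((k + 2 : ℕ) : ℤ) = k + 2 by push_cast; ring, T_add_two,
      show ((k + 1 : ℕ) : ℤ) = k + 1 by push_cast; ring]
    simp only [eval_sub, eval_mul, eval_ofNat, eval_X, sub_smul, mul_smul]

theorem ofReal_eval_T (n : ℤ) (x : ℝ) : (((T ℝ n).eval x : ℝ) : ℂ) = (T ℂ n).eval (x : ℂ) := by
  rw [← map_T Complex.ofRealHom, eval_map]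
  exact (eval₂_hom Complex.ofRealHom x).symm

end Polynomial.Chebyshev

namespace Matrix

variable {ι R : Type*} [Fintype ι] [DecidableEq ι] [CommRing R]

theorem pow_add_two_mulVec_of_mulVec_mulVec {W : Matrix ι ι R} {u : ι → R} {c : R}
    (h : W *ᵥ (W *ᵥ u) = (2 * c) • (W *ᵥ u) - u) (k : ℕ) :
    (W ^ (k + 2)) *ᵥ u = (2 * c) • ((W ^ (k + 1)) *ᵥ u) - (W ^ k) *ᵥ u := by
  rw [pow_add, ← mulVec_mulVec, sq, ← mulVec_mulVec, h, mulVec_sub, mulVec_smul, pow_add,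
    pow_one, ← mulVec_mulVec]

variable {κ : Type*} [Fintype κ] [DecidableEq κ] {T : Matrix ι κ R} {T' : Matrix κ ι R}
  {S W : Matrix ι ι R}

/-- `2 T T' - 1` is a reflection fixing the range of `T`, so `W` acts on it as `S`. -/
theorem walk_mulVec_mulVec (hT : T' * T = 1) (hW : W = S * ((2 : R) • (T * T') - 1))
    (x : κ → R) : W *ᵥ (T *ᵥ x) = S *ᵥ (T *ᵥ x) := by
  have hT'T : T' *ᵥ (T *ᵥ x) = x := by rw [mulVec_mulVec, hT, one_mulVec]
  rw [hW, ← mulVec_mulVec, sub_mulVec, smul_mulVec, ← mulVec_mulVec, hT'T, one_mulVec, two_smul,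
    add_sub_cancel_right]

theorem walk_mulVec_walk_mulVec (hT : T' * T = 1) (hS : S * S = 1)
    (hW : W = S * ((2 : R) • (T * T') - 1)) {x : κ → R} {c : R}
    (heig : (T' * S * T) *ᵥ x = c • x) :
    W *ᵥ (W *ᵥ (T *ᵥ x)) = (2 * c) • (W *ᵥ (T *ᵥ x)) - T *ᵥ x := by
  have hT'Su : T' *ᵥ (S *ᵥ (T *ᵥ x)) = c • x := by
    rw [mulVec_mulVec, mulVec_mulVec, heig]
  rw [walk_mulVec_mulVec hT hW, hW, ← mulVec_mulVec, sub_mulVec, smul_mulVec, one_mulVec,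
    ← mulVec_mulVec _ T, hT'Su, mulVec_sub, mulVec_smul, mulVec_smul, mulVec_mulVec _ S S, hS,
    one_mulVec, mulVec_smul, smul_smul]

end Matrix

theorem compressed_walk_eq_chebyshev_general {m n : ℕ} (T : Matrix (Fin m) (Fin n) ℂ)
    (hT : Tᴴ * T = 1) (S : Matrix (Fin m) (Fin m) ℂ) (hS2 : S * S = 1)
    (x : Fin n → ℂ)
    (lam : ℝ) (heig : (Tᴴ * S * T).mulVec x = (lam : ℂ) • x)
    (W : Matrix (Fin m) (Fin m) ℂ) (hW : W = S * ((2 : ℂ) • (T * Tᴴ) - 1)) :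
    ∀ k : ℕ,
      Tᴴ.mulVec ((W ^ k).mulVec (T.mulVec x)) =
        (((Polynomial.Chebyshev.T ℝ (k : ℤ)).eval lam : ℝ) : ℂ) • x := by
  intro k
  rw [Chebyshev.ofReal_eval_T]
  refine Chebyshev.eq_T_eval_smul_of_recurrence (a := fun k ↦ Tᴴ *ᵥ ((W ^ k) *ᵥ (T *ᵥ x)))
    ?_ ?_ (fun k ↦ ?_) k
  · rw [pow_zero, one_mulVec, mulVec_mulVec, hT, one_mulVec]
  · rw [pow_one, walk_mulVec_mulVec hT hW, mulVec_mulVec, mulVec_mulVec, heig]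
  · rw [pow_add_two_mulVec_of_mulVec_mulVec (walk_mulVec_walk_mulVec hT hS2 hW heig),
      mulVec_sub, mulVec_smul]

/-- Core of the quantum-walk implementation of Chebyshev polynomials: on each unit
eigenvector `x` of `Tᴴ S T` with eigenvalue `λ` (|λ| < 1), the compressed operator
`Tᴴ Wᵏ T` acts as multiplication by `Tₖ(λ)`. -/
theorem compressed_walk_eq_chebyshev {m n : ℕ} (T : Matrix (Fin m) (Fin n) ℂ)
    (hT : Tᴴ * T = 1) (S : Matrix (Fin m) (Fin m) ℂ) (hS : Sᴴ = S) (hS2 : S * S = 1)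
    (x : Fin n → ℂ) (hx : ∑ i, starRingEnd ℂ (x i) * x i = 1)
    (lam : ℝ) (hlam : lam ^ 2 < 1) (heig : (Tᴴ * S * T).mulVec x = (lam : ℂ) • x)
    (W : Matrix (Fin m) (Fin m) ℂ) (hW : W = S * ((2 : ℂ) • (T * Tᴴ) - 1)) :
    ∀ k : ℕ,
      Tᴴ.mulVec ((W ^ k).mulVec (T.mulVec x)) =
        (((Polynomial.Chebyshev.T ℝ (k : ℤ)).eval lam : ℝ) : ℂ) • x :=
  compressed_walk_eq_chebyshev_general T hT S hS2 x lam heig W hW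
end
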